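/- arXiv:2210.16008 — 3 statements merged into one kernel-verified Lean document; each statement's English description precedes it below -/
import Mathlib

section
/- Let V = k·e ⊕ V' be a finite-dimensional vector space over a field k of characteristic ≠ 2, with e ≠ 0. For x ∈ V' and y ∈ ⋀²V', the 2-vector e ∧ x + y ∈ ⋀²V is decomposable if and only if x ∧ y = 0 in ⋀³V' and y ∧ y = 0 in ⋀⁴V'. -/
/-!
If `w = e ∧ x + y` is decomposable then `w ∧ w = 0`. Since `y` has even degree it commutes with
vectors, so `w ∧ w = 2 e ∧ x ∧ y + y ∧ y`, and contracting with the coordinate functional of `e`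
separates the two summands.

Conversely, by the Euler identity `∑ eᵢ ∧ (eᵢ* ⌋ y) = 2 y`, a nonzero `y ∈ ⋀²V'` has a nonzero
contraction `c = f ⌋ y ∈ V'`; contracting `y ∧ y = 0` with `f` gives `c ∧ y = 0`, hence
`y = c ∧ d`. Then `x ∧ c ∧ d = 0` forces `x = α c + β d`, and
`e ∧ x + c ∧ d = (β e + c) ∧ (-α e + d)`.
-/

open CliffordAlgebra (contractLeft involute)

namespace ExteriorAlgebra

section CommRing

variable {R M N : Type*} [CommRing R] [AddCommGroup M] [Module R M] [AddCommGroup N] [Module R N]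

theorem ι_mul_ι_anticomm (a b : M) : ι R a * ι R b = -(ι R b * ι R a) :=
  eq_neg_of_add_eq_zero_left (ι_add_mul_swap a b)

theorem ι_mul_ι_mul_self (a b : M) : ι R a * ι R b * (ι R a * ι R b) = 0 := by
  rw [mul_assoc, ← mul_assoc (ι R b), ι_mul_ι_anticomm b a]
  simp [mul_assoc]

theorem contractLeft_mul (f : Module.Dual R M) (a b : ExteriorAlgebra R M) :
    contractLeft f (a * b) = contractLeft f a * b + involute a * contractLeft f b := by
  induction a using CliffordAlgebra.left_induction generalizing b with
  | algebraMap r => simp [CliffordAlgebra.contractLeft_algebraMap_mul]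
  | add a a' ha ha' =>
    simp only [add_mul, map_add, ha, ha']
    abel
  | ι_mul a m ha =>
    simp only [mul_assoc, CliffordAlgebra.contractLeft_ι_mul, ha, map_mul,
      CliffordAlgebra.involute_ι, sub_mul, mul_add, Algebra.smul_def]
    noncomm_ring

theorem contractLeft_map_eq_zero (g : M →ₗ[R] N) (f : Module.Dual R N) (hfg : f ∘ₗ g = 0)
    (z : ExteriorAlgebra R M) : contractLeft f (map g z) = 0 := by
  induction z using CliffordAlgebra.left_induction with
  | algebraMap r => rw [AlgHom.commutes, CliffordAlgebra.contractLeft_algebraMap]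
  | add a b ha hb => rw [map_add, map_add, ha, hb, add_zero]
  | ι_mul a m ha =>
    rw [map_mul, map_apply_ι, CliffordAlgebra.contractLeft_ι_mul, ha, ← LinearMap.comp_apply, hfg]
    simp

theorem map_mem_exteriorPower (g : M →ₗ[R] N) {n : ℕ} {z : ExteriorAlgebra R M}
    (hz : z ∈ ⋀[R]^n M) : map g z ∈ ⋀[R]^n N := by
  have : (⋀[R]^n M).map (map g).toLinearMap ≤ ⋀[R]^n N := by
    rw [exteriorPower, Submodule.map_pow]
    exact pow_le_pow_left' (by rw [ι_range_map_map]; exact LinearMap.map_le_range) n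
  exact this ⟨z, hz, rfl⟩

theorem ιMulti_two (v : Fin 2 → M) : ιMulti R 2 v = ι R (v 0) * ι R (v 1) := by
  simp [ιMulti_succ_apply, ιMulti_zero_apply, Matrix.vecTail]

theorem ι_mul_ι_mem_exteriorPower_two (a b : M) : ι R a * ι R b ∈ ⋀[R]^2 M := by
  simpa [ιMulti_two] using ιMulti_range R 2 ⟨![a, b], rfl⟩

@[elab_as_elim]
theorem exteriorPower_two_induction {P : (y : ExteriorAlgebra R M) → y ∈ ⋀[R]^2 M → Prop}
    (ι_mul_ι : ∀ a b, P (ι R a * ι R b) (ι_mul_ι_mem_exteriorPower_two a b))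
    (zero : P 0 (zero_mem _))
    (add : ∀ y z hy hz, P y hy → P z hz → P (y + z) (add_mem hy hz))
    (smul : ∀ (r : R) y hy, P y hy → P (r • y) (Submodule.smul_mem _ r hy))
    {y : ExteriorAlgebra R M} (hy : y ∈ ⋀[R]^2 M) : P y hy := by
  suffices ∀ y (hy : y ∈ Submodule.span R (Set.range (ιMulti R 2))), ∃ h, P y h from
    (this y (by rwa [ιMulti_span_fixedDegree])).2
  intro y hy
  induction hy using Submodule.span_induction with
  | mem z hz =>
    obtain ⟨v, rfl⟩ := hz
    simp only [ιMulti_two]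
    exact ⟨ι_mul_ι_mem_exteriorPower_two _ _, ι_mul_ι (v 0) (v 1)⟩
  | zero => exact ⟨_, zero⟩
  | add y z _ _ hy hz => exact ⟨_, add y z _ _ hy.2 hz.2⟩
  | smul r y _ hy => exact ⟨_, smul r y _ hy.2⟩

theorem involute_eq_self_of_mem_exteriorPower_two {y : ExteriorAlgebra R M}
    (hy : y ∈ ⋀[R]^2 M) : involute y = y := by
  induction hy using exteriorPower_two_induction with
  | ι_mul_ι a b => simp [CliffordAlgebra.involute_ι]
  | zero => simp
  | add y z _ _ hy hz => rw [map_add, hy, hz]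
  | smul r y _ hy => rw [map_smul, hy]

theorem commute_ι_of_mem_exteriorPower_two (m : M) {y : ExteriorAlgebra R M}
    (hy : y ∈ ⋀[R]^2 M) : Commute (ι R m) y := by
  induction hy using exteriorPower_two_induction with
  | ι_mul_ι a b =>
    simp only [Commute, SemiconjBy, ← mul_assoc, ι_mul_ι_anticomm m a, neg_mul]
    rw [mul_assoc (ι R a), ι_mul_ι_anticomm m b, mul_neg, neg_neg, mul_assoc]
  | zero => exact Commute.zero_right _
  | add y z _ _ hy hz => exact hy.add_right hz
  | smul r y _ hy => exact hy.smul_right r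

theorem exists_contractLeft_eq_ι_of_mem_exteriorPower_two (f : Module.Dual R M)
    {y : ExteriorAlgebra R M} (hy : y ∈ ⋀[R]^2 M) : ∃ c : M, contractLeft f y = ι R c := by
  induction hy using exteriorPower_two_induction with
  | ι_mul_ι a b =>
    refine ⟨f a • b - f b • a, ?_⟩
    rw [CliffordAlgebra.contractLeft_ι_mul, CliffordAlgebra.contractLeft_ι, ← Algebra.commutes,
      ← Algebra.smul_def, map_sub, map_smul, map_smul]
  | zero => exact ⟨0, by simp⟩
  | add y z _ _ hy hz =>
    obtain ⟨c, hc⟩ := hy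
    obtain ⟨d, hd⟩ := hz
    exact ⟨c + d, by rw [map_add, hc, hd, map_add]⟩
  | smul r y _ hy =>
    obtain ⟨c, hc⟩ := hy
    exact ⟨r • c, by rw [map_smul, hc, map_smul]⟩

theorem sum_ι_mul_contractLeft_ι_mul {I : Type*} [Fintype I] (b : Module.Basis I R M) (m : M)
    (w : ExteriorAlgebra R M) :
    ∑ i, ι R (b i) * contractLeft (b.coord i) (ι R m * w)
      = ι R m * w + ι R m * ∑ i, ι R (b i) * contractLeft (b.coord i) w := by
  have hm : ∑ i, b.coord i m • ι R (b i) = ι R m := by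
    simp_rw [← map_smul, ← map_sum, Module.Basis.coord_apply, b.sum_repr]
  simp_rw [CliffordAlgebra.contractLeft_ι_mul, mul_sub, Finset.sum_sub_distrib, mul_smul_comm,
    ← smul_mul_assoc, ← Finset.sum_mul, hm, ← mul_assoc, ι_mul_ι_anticomm (b _) m, Finset.mul_sum,
    neg_mul, Finset.sum_neg_distrib, sub_neg_eq_add, mul_assoc]

theorem sum_ι_mul_contractLeft_of_mem_exteriorPower {I : Type*} [Fintype I]
    (b : Module.Basis I R M) {n : ℕ} {z : ExteriorAlgebra R M} (hz : z ∈ ⋀[R]^n M) :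
    ∑ i, ι R (b i) * contractLeft (b.coord i) z = n • z := by
  rw [← ιMulti_span_fixedDegree] at hz
  induction hz using Submodule.span_induction with
  | mem z hz =>
    obtain ⟨v, rfl⟩ := hz
    induction n with
    | zero => simp [ιMulti_zero_apply, CliffordAlgebra.contractLeft_one]
    | succ n ih =>
      rw [ιMulti_succ_apply, sum_ι_mul_contractLeft_ι_mul, ih, mul_smul_comm, succ_nsmul']
  | zero => simp
  | add y z _ _ hy hz => simp only [map_add, mul_add, Finset.sum_add_distrib, hy, hz, smul_add]
  | smul r y _ hy => simp only [map_smul, mul_smul_comm, ← Finset.smul_sum, hy, smul_comm r]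

theorem eq_ι_mul_contractLeft_of_ι_mul_eq_zero (f : Module.Dual R M) {c : M} (hc : f c = 1)
    {y : ExteriorAlgebra R M} (h : ι R c * y = 0) : y = ι R c * contractLeft f y := by
  have := congrArg (contractLeft f) h
  rwa [CliffordAlgebra.contractLeft_ι_mul, hc, one_smul, map_zero, sub_eq_zero] at this

theorem ι_mul_ι_add_ι_mul_ι (e c d : M) (α β : R) :
    ι R e * ι R (α • c + β • d) + ι R c * ι R d = ι R (β • e + c) * ι R (-α • e + d) := by
  simp only [map_add, map_smul, mul_add, add_mul, smul_mul_assoc, mul_smul_comm, ι_sq_zero,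
    ι_mul_ι_anticomm c e, smul_zero]
  module

theorem mul_self_ι_mul_ι_add_map (g : M →ₗ[R] N) (e : N) (x : M) {y : ExteriorAlgebra R M}
    (hy : y ∈ ⋀[R]^2 M) :
    (ι R e * ι R (g x) + map g y) * (ι R e * ι R (g x) + map g y)
      = 2 • (ι R e * map g (ι R x * y)) + map g (y * y) := by
  have hy' := map_mem_exteriorPower g hy
  have hcomm : Commute (ι R e * ι R (g x)) (map g y) :=
    (commute_ι_of_mem_exteriorPower_two e hy').mul_left
      (commute_ι_of_mem_exteriorPower_two (g x) hy')
  rw [map_mul, map_mul, map_apply_ι, add_mul, mul_add, mul_add, ι_mul_ι_mul_self, ← hcomm.eq,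
    two_nsmul, mul_assoc]
  abel

end CommRing

section Field

variable {k M : Type*} [Field k] [AddCommGroup M] [Module k M]

theorem exists_contractLeft_ne_zero [FiniteDimensional k M] {n : ℕ} (hn : (n : k) ≠ 0)
    {z : ExteriorAlgebra k M} (hz : z ∈ ⋀[k]^n M) (hz0 : z ≠ 0) :
    ∃ f : Module.Dual k M, contractLeft f z ≠ 0 := by
  by_contra! h
  have := sum_ι_mul_contractLeft_of_mem_exteriorPower (Module.finBasis k M) hz
  rw [Finset.sum_eq_zero fun i _ => by rw [h, mul_zero], ← Nat.cast_smul_eq_nsmul k] at this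
  exact hz0 ((smul_eq_zero.mp this.symm).resolve_left hn)

theorem exists_eq_ι_mul_ι_of_mul_self_eq_zero [FiniteDimensional k M] (h2 : (2 : k) ≠ 0)
    {y : ExteriorAlgebra k M} (hy : y ∈ ⋀[k]^2 M) (hyy : y * y = 0) :
    ∃ c d : M, y = ι k c * ι k d := by
  by_cases hy0 : y = 0
  · exact ⟨0, 0, by simp [hy0]⟩
  obtain ⟨f, hf⟩ := exists_contractLeft_ne_zero (n := 2) (by exact_mod_cast h2) hy hy0
  obtain ⟨c, hc⟩ := exists_contractLeft_eq_ι_of_mem_exteriorPower_two f hy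
  have hcy : ι k c * y = 0 := by
    have := congrArg (contractLeft f) hyy
    rw [contractLeft_mul, involute_eq_self_of_mem_exteriorPower_two hy, hc,
      ← (commute_ι_of_mem_exteriorPower_two c hy).eq, ← two_smul k, map_zero] at this
    exact (smul_eq_zero.mp this).resolve_left h2
  obtain ⟨g, hg⟩ := Module.Projective.exists_dual_eq_one k (x := c) (by rintro rfl; simp_all)
  obtain ⟨d, hd⟩ := exists_contractLeft_eq_ι_of_mem_exteriorPower_two g hy
  exact ⟨c, d, hd ▸ eq_ι_mul_contractLeft_of_ι_mul_eq_zero g hg hcy⟩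

theorem mem_span_pair_of_ι_mul_ι_mul_ι_eq_zero {x c d : M} (h : ι k x * (ι k c * ι k d) = 0)
    (hcd : ι k c * ι k d ≠ 0) : x ∈ Submodule.span k {c, d} := by
  by_contra hx
  obtain ⟨f, hfx, hf⟩ := Submodule.exists_dual_map_eq_bot_of_notMem hx inferInstance
  have hf0 : ∀ m ∈ Submodule.span k {c, d}, f m = 0 := fun m hm => by
    simpa [hf] using Submodule.mem_map_of_mem (f := f) hm
  have := congrArg (contractLeft f) h
  rw [CliffordAlgebra.contractLeft_ι_mul, CliffordAlgebra.contractLeft_ι_mul,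
    CliffordAlgebra.contractLeft_ι, hf0 c (Submodule.subset_span (by simp)),
    hf0 d (Submodule.subset_span (by simp))] at this
  simp only [map_zero, mul_zero, zero_smul, sub_zero, map_zero] at this
  exact hcd ((smul_eq_zero.mp this).resolve_left hfx)

end Field

end ExteriorAlgebra

open ExteriorAlgebra

theorem ι_mul_eq_zero_and_mul_self_eq_zero_of_mul_self_eq_zero {k V : Type*} [Field k]
    [AddCommGroup V] [Module k V] (h2 : (2 : k) ≠ 0) {x : V} {y : ExteriorAlgebra k V}
    (hy : y ∈ ⋀[k]^2 V)
    (h : (ι k ((1 : k), (0 : V)) * ι k ((0 : k), x) + map (LinearMap.inr k k V) y) *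
      (ι k ((1 : k), (0 : V)) * ι k ((0 : k), x) + map (LinearMap.inr k k V) y) = 0) :
    ι k x * y = 0 ∧ y * y = 0 := by
  have hJ : Function.Injective (map (LinearMap.inr k k V)) :=
    map_injective ⟨LinearMap.snd k k V, LinearMap.snd_comp_inr k k V⟩
  have hfst (z : ExteriorAlgebra k V) :
      contractLeft (LinearMap.fst k k V) (map (LinearMap.inr k k V) z) = 0 :=
    contractLeft_map_eq_zero _ _ (LinearMap.fst_comp_inr k k V) z
  rw [show ((0 : k), x) = LinearMap.inr k k V x from rfl, mul_self_ι_mul_ι_add_map _ _ _ hy] at h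
  have hxy : ι k x * y = 0 := by
    -- `e* ⌋ -` kills the image of `⋀V'` and strips `e` off `e ∧ z`
    have := congrArg (contractLeft (LinearMap.fst k k V)) h
    rw [map_add, map_nsmul, CliffordAlgebra.contractLeft_ι_mul, hfst, hfst, mul_zero, sub_zero,
      add_zero, map_zero, LinearMap.fst_apply, one_smul, ← Nat.cast_smul_eq_nsmul k] at this
    exact (map_eq_zero_iff _ hJ).mp ((smul_eq_zero.mp this).resolve_left (by exact_mod_cast h2))
  rw [hxy, map_zero, mul_zero, smul_zero, zero_add, map_eq_zero_iff _ hJ] at h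
  exact ⟨hxy, h⟩

/-- For `V = k·e ⊕ V'` (modelled as `k × V'` with `e = (1,0)`), `x ∈ V'` and
`y ∈ ⋀²V'`, the 2-vector `e ∧ x + y ∈ ⋀²V` is decomposable iff `x ∧ y = 0` in `⋀³V'`
and `y ∧ y = 0` in `⋀⁴V'`. -/
theorem stmt3 (k : Type*) [Field k] (h2 : (2 : k) ≠ 0) (V' : Type*)
    [AddCommGroup V'] [Module k V'] [FiniteDimensional k V']
    (x : V') (y : ExteriorAlgebra k V') (hy : y ∈ ⋀[k]^2 V') :
    (∃ a b : k × V',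
        ι k ((1 : k), (0 : V')) * ι k ((0 : k), x)
          + ExteriorAlgebra.map (LinearMap.inr k k V') y = ι k a * ι k b) ↔
      (ι k x * y = 0 ∧ y * y = 0) := by
  constructor
  · rintro ⟨a, b, hab⟩
    refine ι_mul_eq_zero_and_mul_self_eq_zero_of_mul_self_eq_zero h2 hy ?_
    rw [hab, ι_mul_ι_mul_self]
  · rintro ⟨hxy, hyy⟩
    obtain ⟨c, d, rfl⟩ := exists_eq_ι_mul_ι_of_mul_self_eq_zero h2 hy hyy
    by_cases hcd : ι k c * ι k d = 0
    · exact ⟨((1 : k), (0 : V')), ((0 : k), x), by rw [hcd, map_zero, add_zero]⟩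
    obtain ⟨α, β, rfl⟩ :=
      Submodule.mem_span_pair.mp (mem_span_pair_of_ι_mul_ι_mul_ι_eq_zero hxy hcd)
    refine ⟨(β, c), (-α, d), ?_⟩
    convert ι_mul_ι_add_ι_mul_ι ((1 : k), (0 : V')) ((0 : k), c) ((0 : k), d) α β using 3 <;>
      simp [map_apply_ι]
end

section
/- Let Z ⊆ Mat(3×4, ℂ) × ℂ⁴ be the affine cone defined by the three quadratic equations M·x = 0. A nonzero point (M, x) ∈ Z is a smooth point of Z (i.e., the Jacobian of the three defining quadrics at (M,x) has rank 3) if and only if x ≠ 0 or rank M = 3. -/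
open Matrix

/-- A nonzero point `(M,x)` of the cone `Z = {Mx = 0} ⊆ Mat(3×4,ℂ) × ℂ⁴` is a smooth
point of `Z` (the Jacobian of the three defining quadrics, i.e. the linear map
`(N,u) ↦ N·x + M·u`, has rank 3, equivalently is surjective onto `ℂ³`)
iff `x ≠ 0` or `rank M = 3`. -/
theorem stmt8 (M : Matrix (Fin 3) (Fin 4) ℂ) (x : Fin 4 → ℂ)
    (hZ : M.mulVec x = 0) (hne : ¬(M = 0 ∧ x = 0)) :
    Function.Surjective
        (fun p : Matrix (Fin 3) (Fin 4) ℂ × (Fin 4 → ℂ) =>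
          p.1.mulVec x + M.mulVec p.2) ↔
      (x ≠ 0 ∨ M.rank = 3) := by
  constructor
  · intro hs
    by_contra h
    push_neg at h
    obtain ⟨hx, hr⟩ := h
    apply hr
    have hsurj : Function.Surjective M.mulVecLin := by
      intro v
      obtain ⟨⟨N, u⟩, h⟩ := hs v
      exact ⟨u, by simpa [hx] using h⟩
    have ht := LinearMap.range_eq_top.mpr hsurj
    rw [Matrix.rank, ht]
    simp
  · rintro (hx | hr)
    · intro v
      obtain ⟨j, hj⟩ := Function.ne_iff.mp hx
      simp only [Pi.zero_apply] at hj
      refine ⟨⟨fun i k => if k = j then v i / x j else 0, 0⟩, ?_⟩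
      funext i
      simp [Matrix.mulVec, dotProduct, Finset.sum_ite_eq', hj, div_mul_cancel₀ _ hj]
    · intro v
      have hsurj : Function.Surjective M.mulVecLin := by
        rw [← LinearMap.range_eq_top]
        apply Submodule.eq_top_of_finrank_eq
        rw [← Matrix.rank, hr]
        simp
      obtain ⟨u, hu⟩ := hsurj v
      exact ⟨⟨0, u⟩, by simp [← hu, Matrix.mulVecLin_apply]⟩
end

section
/- Let f : ℂ³ × ℂ³ × sl₃(ℂ) → ℂ², f(y, x, M) = (ᵗy·x, ᵗy·M·x), where sl₃(ℂ) is the space of traceless 3×3 complex matrices. Let (y, x, M) be a point with f(y,x,M) = (0,0) and (y,x,M) ≠ 0. Then the differential of f at (y, x, M) is surjective if and only if neither of the following holds: (a) x = 0 and the 2×3 matrix with rows ᵗy and ᵗy·M has rank ≤ 1; (b) y = 0 and the 2×3 matrix with rows ᵗx and ᵗx·ᵗM has rank ≤ 1. -/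
/-!
If `x = 0` (resp. `y = 0`) the differential depends only on `ξ` (resp. `η`), through the two
linear forms `ᵗy, ᵗy M` (resp. `ᵗx, ᵗx ᵗM`), so it is onto `K²` exactly when these forms are
independent. If `x, y ≠ 0`, then `ξ` reaches any first coordinate, and the traceless matrix
`N = u ᵗv - (tr (u ᵗv) / n) • 1` reaches any second one: since `ᵗy x = 0`, the trace correction
does not change `ᵗy N x = (ᵗy u) (ᵗv x)`.
-/

open Matrix

namespace Matrix

variable {K m n : Type*} [Field K] [Fintype m] [Fintype n]

theorem mulVec_surjective_iff_rank_eq (A : Matrix m n K) :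
    Function.Surjective A.mulVec ↔ A.rank = Fintype.card m := by
  rw [← Module.finrank_fintype_fun_eq_card (R := K), rank, ← Submodule.eq_top_iff_finrank_eq,
    LinearMap.range_eq_top]
  rfl

theorem surjective_dotProduct_pair_iff (r s : n → K) :
    Function.Surjective (fun v => ((r ⬝ᵥ v, s ⬝ᵥ v) : K × K)) ↔ ¬ (of ![r, s]).rank ≤ 1 := by
  have hmulVec : (fun v => ((r ⬝ᵥ v, s ⬝ᵥ v) : K × K)) =
      finTwoArrowEquiv K ∘ (of ![r, s]).mulVec := by
    ext v <;> simp [mulVec]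
  have hrank : (of ![r, s]).rank ≤ 2 := by simpa using (of ![r, s]).rank_le_card_height
  rw [hmulVec, EquivLike.comp_surjective, mulVec_surjective_iff_rank_eq, Fintype.card_fin]
  omega

theorem rank_of_zero_row_le_one (s : n → K) : (of ![0, s]).rank ≤ 1 := by
  have : ¬ Function.Surjective (fun v => (((0 : n → K) ⬝ᵥ v, s ⬝ᵥ v) : K × K)) := fun h => by
    obtain ⟨v, hv⟩ := h (1, 0)
    simpa using congrArg Prod.fst hv
  rwa [surjective_dotProduct_pair_iff, not_not] at this

theorem exists_dotProduct_eq {y : n → K} (hy : y ≠ 0) (a : K) : ∃ ξ, y ⬝ᵥ ξ = a := by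
  classical
  obtain ⟨i, hi⟩ := Function.ne_iff.mp hy
  exact ⟨Pi.single i (a / y i), by rw [dotProduct_single, mul_div_cancel₀ a hi]⟩

variable [DecidableEq n] [CharZero K]

theorem exists_trace_eq_zero_dotProduct_mulVec_eq {y x : n → K} (hy : y ≠ 0) (hx : x ≠ 0)
    (hyx : y ⬝ᵥ x = 0) (c : K) : ∃ N : Matrix n n K, N.trace = 0 ∧ y ⬝ᵥ N *ᵥ x = c := by
  obtain ⟨u, hu⟩ := exists_dotProduct_eq hy c
  obtain ⟨v, hv⟩ := exists_dotProduct_eq hx 1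
  have hcard : (Fintype.card n : K) ≠ 0 := by
    have : Nonempty n := (Function.ne_iff.mp hy).nonempty
    exact_mod_cast Fintype.card_ne_zero
  refine ⟨vecMulVec u v - (trace (vecMulVec u v) / Fintype.card n) • 1, ?_, ?_⟩
  · simp [field]
  · rw [sub_mulVec, dotProduct_sub, smul_mulVec, one_mulVec, dotProduct_smul, hyx,
      vecMulVec_mulVec, dotProduct_comm v x, hv]
    simp [hu]

end Matrix

namespace KeyVariety

variable {K n : Type*} [Field K] [Fintype n]

-- The differential at `(y, x, M)` of `f(y, x, M) = (ᵗy x, ᵗy M x)` on `Kⁿ × Kⁿ × slₙ(K)`.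
def differential (y x : n → K) (M : Matrix n n K) :
    (n → K) × (n → K) × {N : Matrix n n K // N.trace = 0} → K × K :=
  fun p => (p.1 ⬝ᵥ x + y ⬝ᵥ p.2.1,
    p.1 ⬝ᵥ M *ᵥ x + y ⬝ᵥ (p.2.2 : Matrix n n K) *ᵥ x + y ⬝ᵥ M *ᵥ p.2.1)

theorem differential_zero_right_surjective_iff (y : n → K) (M : Matrix n n K) :
    Function.Surjective (differential y 0 M) ↔ ¬ (of ![y, y ᵥ* M]).rank ≤ 1 := by
  have hfactor : differential y 0 M = (fun ξ => (y ⬝ᵥ ξ, (y ᵥ* M) ⬝ᵥ ξ)) ∘ fun p => p.2.1 := by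
    ext p <;> simp [differential, dotProduct_mulVec]
  have hproj : Function.Surjective fun p : (n → K) × (n → K) × {N : Matrix n n K // N.trace = 0} =>
      p.2.1 :=
    fun ξ => ⟨(0, ξ, ⟨0, trace_zero n K⟩), rfl⟩
  rw [hfactor, hproj.of_comp_iff, surjective_dotProduct_pair_iff]

theorem differential_zero_left_surjective_iff (x : n → K) (M : Matrix n n K) :
    Function.Surjective (differential 0 x M) ↔ ¬ (of ![x, M *ᵥ x]).rank ≤ 1 := by
  have hfactor : differential 0 x M = (fun η => (x ⬝ᵥ η, (M *ᵥ x) ⬝ᵥ η)) ∘ Prod.fst := by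
    ext p <;> simp [differential, dotProduct_comm]
  have hproj : Function.Surjective
      (Prod.fst : (n → K) × (n → K) × {N : Matrix n n K // N.trace = 0} → n → K) :=
    fun η => ⟨(η, 0, ⟨0, trace_zero n K⟩), rfl⟩
  rw [hfactor, hproj.of_comp_iff, surjective_dotProduct_pair_iff]

theorem differential_surjective [DecidableEq n] [CharZero K] {y x : n → K} (hy : y ≠ 0)
    (hx : x ≠ 0) (hyx : y ⬝ᵥ x = 0) (M : Matrix n n K) :
    Function.Surjective (differential y x M) := by
  rintro ⟨a, b⟩
  obtain ⟨ξ, hξ⟩ := exists_dotProduct_eq hy a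
  obtain ⟨N, hN, hNx⟩ := exists_trace_eq_zero_dotProduct_mulVec_eq hy hx hyx (b - y ⬝ᵥ M *ᵥ ξ)
  exact ⟨(0, ξ, ⟨N, hN⟩), by simp [differential, hξ, hNx]⟩

end KeyVariety

open KeyVariety in
theorem stmt9_general (y x : Fin 3 → ℂ) (M : Matrix (Fin 3) (Fin 3) ℂ)
    (h1 : y ⬝ᵥ x = 0) :
    Function.Surjective
        (fun p : (Fin 3 → ℂ) × (Fin 3 → ℂ) × {N : Matrix (Fin 3) (Fin 3) ℂ // N.trace = 0} =>
          ((p.1 ⬝ᵥ x + y ⬝ᵥ p.2.1,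
            p.1 ⬝ᵥ M.mulVec x + y ⬝ᵥ (p.2.2 : Matrix (Fin 3) (Fin 3) ℂ).mulVec x
              + y ⬝ᵥ M.mulVec p.2.1) : ℂ × ℂ)) ↔
      ¬((x = 0 ∧ (Matrix.of ![y, y ᵥ* M]).rank ≤ 1) ∨
        (y = 0 ∧ (Matrix.of ![x, M.mulVec x]).rank ≤ 1)) := by
  change Function.Surjective (differential y x M) ↔ _
  by_cases hx : x = 0
  · subst hx
    have hy : y = 0 → (of ![y, y ᵥ* M]).rank ≤ 1 := by
      rintro rfl
      simpa using rank_of_zero_row_le_one (0 : Fin 3 → ℂ)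
    rw [differential_zero_right_surjective_iff]
    tauto
  by_cases hy : y = 0
  · subst hy
    rw [differential_zero_left_surjective_iff]
    tauto
  exact iff_of_true (differential_surjective hy hx h1 M) (by tauto)

/-- Singular locus computation for the genus-4 key variety extension:
for `f(y,x,M) = (ᵗy·x, ᵗy·M·x)` on `ℂ³ × ℂ³ × sl₃(ℂ)`, at a nonzero zero `(y,x,M)` of
`f`, the differential `(η,ξ,N) ↦ (ᵗη x + ᵗy ξ, ᵗη M x + ᵗy N x + ᵗy M ξ)` is surjective
iff neither (a) `x = 0` and `rank (rows ᵗy, ᵗyM) ≤ 1`, nor (b) `y = 0` and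
`rank (rows ᵗx, ᵗxᵗM) ≤ 1`. -/
theorem stmt9 (y x : Fin 3 → ℂ) (M : Matrix (Fin 3) (Fin 3) ℂ) (hM : M.trace = 0)
    (h1 : y ⬝ᵥ x = 0) (h2 : y ⬝ᵥ M.mulVec x = 0)
    (hne : ¬(y = 0 ∧ x = 0 ∧ M = 0)) :
    Function.Surjective
        (fun p : (Fin 3 → ℂ) × (Fin 3 → ℂ) × {N : Matrix (Fin 3) (Fin 3) ℂ // N.trace = 0} =>
          ((p.1 ⬝ᵥ x + y ⬝ᵥ p.2.1,
            p.1 ⬝ᵥ M.mulVec x + y ⬝ᵥ (p.2.2 : Matrix (Fin 3) (Fin 3) ℂ).mulVec x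
              + y ⬝ᵥ M.mulVec p.2.1) : ℂ × ℂ)) ↔
      ¬((x = 0 ∧ (Matrix.of ![y, y ᵥ* M]).rank ≤ 1) ∨
        (y = 0 ∧ (Matrix.of ![x, M.mulVec x]).rank ≤ 1)) :=
  stmt9_general y x M h1
end
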